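/- arXiv:1302.1333 — 2 statements merged into one kernel-verified Lean document; each statement's English description precedes it below -/
import Mathlib

section
/- Let H be an n×n invertible Hermitian complex matrix my and let A be an n×n Hermitian complex matrix with H·A = A·H. Then for every real t and all n×n complex matrices X and Y, tr((exp(-itA)·X)ᴴ · H⁻² · (exp(-itA)·Y)) = tr(Xᴴ·H⁻²·Y); hence the flow W ↦ exp(-itA)·W generated by the conserved observable A is an isometry of the dynamic metric g_H, i.e. every quantum observable compatible with the Hamiltonian induces a Killing vector field of g_H. -/
open Matrix

/-! The form `(X, Y) ↦ Xᴴ M Y` is invariant under left multiplication by any unitary commuting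
with `M`. Take `M = H⁻¹ H⁻¹` and `U = exp (-itA)`: `U` is unitary because `-itA` is skew-Hermitian,
and it commutes with `M` because `A` commutes with `H`, hence with `H⁻¹`. -/

/-- The dynamic metric `g_H(X,Y) = (1/2)·tr(Xᴴ H⁻² Y + Yᴴ H⁻² X)`. -/
noncomputable def gH {n : ℕ} (H X Y : Matrix (Fin n) (Fin n) ℂ) : ℂ :=
  (1 / 2 : ℂ) * (Xᴴ * (H⁻¹ * H⁻¹) * Y + Yᴴ * (H⁻¹ * H⁻¹) * X).trace

theorem Matrix.commute_nonsing_inv_right {m α : Type*} [Fintype m] [DecidableEq m] [CommRing α]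
    {A B : Matrix m m α} (h : Commute A B) : Commute A B⁻¹ := by
  by_cases hB : IsUnit B.det
  · obtain ⟨u, rfl⟩ := (isUnit_iff_isUnit_det B).mpr hB
    rw [← coe_units_inv]
    exact h.units_inv_right
  · rw [nonsing_inv_apply_not_isUnit B hB]
    exact Commute.zero_right A

theorem Matrix.exp_mem_unitary_of_mem_skewAdjoint {m 𝔸 : Type*} [Fintype m] [DecidableEq m]
    [NormedRing 𝔸] [NormedAlgebra ℚ 𝔸] [CompleteSpace 𝔸] [StarRing 𝔸] [ContinuousStar 𝔸]
    {A : Matrix m m 𝔸} (h : A ∈ skewAdjoint (Matrix m m 𝔸)) :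
    NormedSpace.exp A ∈ unitary (Matrix m m 𝔸) := by
  rw [Unitary.mem_iff, NormedSpace.star_exp, skewAdjoint.mem_iff.mp h,
    ← exp_add_of_commute _ _ (Commute.refl A).neg_left,
    ← exp_add_of_commute _ _ (Commute.refl A).neg_right, neg_add_cancel, add_neg_cancel,
    NormedSpace.exp_zero, and_self]

theorem star_mul_mul_mul_of_mem_unitary {R : Type*} [Monoid R] [StarMul R] {U M : R}
    (hU : U ∈ unitary R) (hUM : Commute U M) (X Y : R) :
    star (U * X) * M * (U * Y) = star X * M * Y := by
  have hUMU : star U * M * U = M := by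
    rw [mul_assoc, ← hUM.eq, ← mul_assoc, Unitary.star_mul_self_of_mem hU, one_mul]
  calc star (U * X) * M * (U * Y) = star X * (star U * M * U) * Y := by
        simp only [star_mul, mul_assoc]
    _ = star X * M * Y := by rw [hUMU]

theorem conserved_observable_killing_general {n : ℕ} (H A : Matrix (Fin n) (Fin n) ℂ)
    (hA : A.IsHermitian)
    (hcomm : H * A = A * H) (t : ℝ) (X Y : Matrix (Fin n) (Fin n) ℂ) :
    ((NormedSpace.exp ((-(t : ℂ) * Complex.I) • A) * X)ᴴ * (H⁻¹ * H⁻¹) *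
        (NormedSpace.exp ((-(t : ℂ) * Complex.I) • A) * Y)).trace
      = (Xᴴ * (H⁻¹ * H⁻¹) * Y).trace ∧
    gH H (NormedSpace.exp ((-(t : ℂ) * Complex.I) • A) * X)
        (NormedSpace.exp ((-(t : ℂ) * Complex.I) • A) * Y) = gH H X Y := by
  have hAM : Commute A (H⁻¹ * H⁻¹) :=
    have hAH := commute_nonsing_inv_right (Commute.symm hcomm)
    hAH.mul_right hAH
  have hskew : (-(t : ℂ) * Complex.I) • A ∈ skewAdjoint (Matrix (Fin n) (Fin n) ℂ) :=
    IsSelfAdjoint.smul_mem_skewAdjoint (by simp [skewAdjoint.mem_iff]) hA.isSelfAdjoint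
  have hinv : ∀ V W : Matrix (Fin n) (Fin n) ℂ,
      (NormedSpace.exp ((-(t : ℂ) * Complex.I) • A) * V)ᴴ * (H⁻¹ * H⁻¹) *
        (NormedSpace.exp ((-(t : ℂ) * Complex.I) • A) * W) = Vᴴ * (H⁻¹ * H⁻¹) * W :=
    star_mul_mul_mul_of_mem_unitary (exp_mem_unitary_of_mem_skewAdjoint hskew)
      (hAM.smul_left _).exp_left
  exact ⟨congrArg trace (hinv X Y), by simp only [gH, hinv]⟩

/-- Every quantum observable `A` compatible with the Hamiltonian (`HA = AH`) induces
a Killing vector field of the dynamic metric `g_H`: its flow `W ↦ exp(-itA)·W` is an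
isometry of `g_H`. -/
theorem conserved_observable_killing {n : ℕ} (H A : Matrix (Fin n) (Fin n) ℂ)
    (hH : H.IsHermitian) (hHinv : IsUnit H.det) (hA : A.IsHermitian)
    (hcomm : H * A = A * H) (t : ℝ) (X Y : Matrix (Fin n) (Fin n) ℂ) :
    ((NormedSpace.exp ((-(t : ℂ) * Complex.I) • A) * X)ᴴ * (H⁻¹ * H⁻¹) *
        (NormedSpace.exp ((-(t : ℂ) * Complex.I) • A) * Y)).trace
      = (Xᴴ * (H⁻¹ * H⁻¹) * Y).trace ∧
    gH H (NormedSpace.exp ((-(t : ℂ) * Complex.I) • A) * X)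
        (NormedSpace.exp ((-(t : ℂ) * Complex.I) • A) * Y) = gH H X Y :=
  conserved_observable_killing_general H A hA hcomm t X Y
end

section
/- Let H be an n×n Hermitian complex matrix and ρ₀ an n×n complex matrix, and define ρ(t) = exp(-itH)·ρ₀·exp(itH). Then ρ is almost periodic: for every ε > 0 there exists L > 0 such that for every a ∈ ℝ there exists T with a ≤ T ≤ a + L and ‖ρ(t+T) - ρ(t)‖ < ε for all t ∈ ℝ, where ‖·‖ is the Frobenius norm. In particular the inequality ‖ρ(t+T) - ρ(t)‖ < ε for all t is satisfied by infinitely many values of T, spread over the whole range -∞ to ∞ so as not to leave arbitrarily long empty intervals. -/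
/-!
The propagator `U t = exp(-itH)` is a one-parameter group in the unitary group, which is compact.
A one-parameter subgroup of a compact group returns to any neighbourhood `V` of the identity
within bounded waiting times: finitely many translates `U r • V` with `|r| ≤ M` cover the closure
of the orbit, so for every `a` some `T = a + M - r ∈ [a, a + 2M]` has `U T ∈ V`. By unitary
invariance of the Frobenius norm, `‖ρ(t + T) - ρ(t)‖ = ‖U T ρ₀ (U T)⋆ - ρ₀‖`, a continuous
function of `U T` that vanishes at the identity.
-/

open Matrix

/-- The Frobenius norm `‖X‖ = (tr(Xᴴ·X))^{1/2}` of a complex matrix. -/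
noncomputable def frobeniusNorm {n : ℕ} (X : Matrix (Fin n) (Fin n) ℂ) : ℝ :=
  Real.sqrt (Xᴴ * X).trace.re

/-- The evolution `ρ(t) = exp(-itH)·ρ₀·exp(itH)`. -/
noncomputable def rhoEvol {n : ℕ} (H ρ₀ : Matrix (Fin n) (Fin n) ℂ) (t : ℝ) :
    Matrix (Fin n) (Fin n) ℂ :=
  NormedSpace.exp ((-(t : ℂ) * Complex.I) • H) * ρ₀ *
    NormedSpace.exp (((t : ℂ) * Complex.I) • H)

open Set Topology

def IsRelativelyDense (S : Set ℝ) : Prop :=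
  ∃ L > 0, ∀ a : ℝ, ∃ T ∈ Icc a (a + L), T ∈ S

theorem AddChar.isRelativelyDense_preimage_of_mem_nhds_one {G : Type*} [Group G]
    [TopologicalSpace G] [IsTopologicalGroup G] [CompactSpace G] (φ : AddChar ℝ G) {V : Set G}
    (hV : V ∈ 𝓝 1) : IsRelativelyDense (φ ⁻¹' V) := by
  obtain ⟨U, hUV, hU, h1U⟩ := mem_nhds_iff.mp hV
  have hcover : closure (range φ) ⊆ ⋃ r : ℝ, (· * (φ r)⁻¹) ⁻¹' U := by
    intro x hx
    have hnhds : {y | x * y⁻¹ ∈ U} ∈ 𝓝 x :=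
      (hU.preimage (by fun_prop)).mem_nhds (by simpa using h1U)
    obtain ⟨_, hy, r, rfl⟩ := mem_closure_iff_nhds.mp hx _ hnhds
    exact mem_iUnion.mpr ⟨r, hy⟩
  obtain ⟨s, hs⟩ := isClosed_closure.isCompact.elim_finite_subcover _
    (fun r => hU.preimage (by fun_prop)) hcover
  set M := ∑ r ∈ s, |r|
  have hM : ∀ r ∈ s, |r| ≤ M := fun r hr => Finset.single_le_sum (fun _ _ => abs_nonneg _) hr
  refine ⟨2 * M + 1, by positivity, fun a => ?_⟩
  obtain ⟨r, hr, hφr⟩ := mem_iUnion₂.mp (hs (subset_closure ⟨a + M, rfl⟩))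
  have hrM := abs_le.mp (hM r hr)
  refine ⟨a + M - r, ⟨by linarith, by linarith⟩, hUV ?_⟩
  rw [sub_eq_add_neg, AddChar.map_add_eq_mul, AddChar.map_neg_eq_inv]
  exact hφr

namespace Matrix

variable {m : Type*} [Fintype m] [DecidableEq m]

theorem isCompact_unitaryGroup {𝕜 : Type*} [RCLike 𝕜] :
    IsCompact (unitaryGroup m 𝕜 : Set (Matrix m m 𝕜)) := by
  have hbox : IsCompact (pi univ fun _ : m => pi univ fun _ : m => Metric.closedBall (0 : 𝕜) 1) :=
    isCompact_univ_pi fun _ => isCompact_univ_pi fun _ => isCompact_closedBall 0 1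
  refine hbox.of_isClosed_subset (isClosed_unitary (R := Matrix m m 𝕜)) fun U hU i _ j _ => ?_
  simpa using entry_norm_bound_of_unitary hU i j

instance {𝕜 : Type*} [RCLike 𝕜] : CompactSpace (unitaryGroup m 𝕜) :=
  isCompact_iff_compactSpace.mp isCompact_unitaryGroup

theorem exp_mem_unitaryGroup_of_mem_skewAdjoint {𝕜 : Type*} [RCLike 𝕜] {A : Matrix m m 𝕜}
    (hA : A ∈ skewAdjoint (Matrix m m 𝕜)) : NormedSpace.exp A ∈ unitaryGroup m 𝕜 := by
  rw [Unitary.mem_iff, NormedSpace.star_exp, skewAdjoint.mem_iff.mp hA,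
    ← exp_add_of_commute _ _ (Commute.refl A).neg_left,
    ← exp_add_of_commute _ _ (Commute.refl A).neg_right, neg_add_cancel, add_neg_cancel,
    NormedSpace.exp_zero, and_self]

noncomputable def IsHermitian.evolution {H : Matrix m m ℂ} (hH : H.IsHermitian) :
    AddChar ℝ (unitaryGroup m ℂ) where
  toFun t := ⟨NormedSpace.exp ((-(t : ℂ) * Complex.I) • H),
    exp_mem_unitaryGroup_of_mem_skewAdjoint
      (IsSelfAdjoint.smul_mem_skewAdjoint (by simp [skewAdjoint.mem_iff]) hH)⟩
  map_zero_eq_one' := by ext1; simp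
  map_add_eq_mul' s t := by
    ext1
    rw [Submonoid.coe_mul,
      ← exp_add_of_commute _ _ (((Commute.refl H).smul_left _).smul_right _), ← add_smul]
    push_cast
    ring_nf

theorem IsHermitian.coe_evolution {H : Matrix m m ℂ} (hH : H.IsHermitian) (t : ℝ) :
    (hH.evolution t : Matrix m m ℂ) = NormedSpace.exp ((-(t : ℂ) * Complex.I) • H) := rfl

end Matrix

section Evolution

variable {n : ℕ}

theorem continuous_frobeniusNorm : Continuous (frobeniusNorm (n := n)) := by
  unfold frobeniusNorm
  fun_prop

theorem frobeniusNorm_mul_mul_star {W : Matrix (Fin n) (Fin n) ℂ}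
    (hW : W ∈ unitaryGroup (Fin n) ℂ) (X : Matrix (Fin n) (Fin n) ℂ) :
    frobeniusNorm (W * X * star W) = frobeniusNorm X := by
  have hWW : star W * W = 1 := Unitary.star_mul_self_of_mem hW
  have hgram : star (W * X * star W) * (W * X * star W) = W * (star X * X) * star W := by
    simp only [star_mul, star_star, mul_assoc]
    rw [← mul_assoc (star W) W, hWW, one_mul]
  simp only [frobeniusNorm, ← star_eq_conjTranspose]
  rw [hgram, trace_mul_cycle, ← mul_assoc, hWW, one_mul]

variable {H : Matrix (Fin n) (Fin n) ℂ} (hH : H.IsHermitian) (ρ₀ : Matrix (Fin n) (Fin n) ℂ)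
include hH

theorem rhoEvol_eq_evolution (t : ℝ) :
    rhoEvol H ρ₀ t = hH.evolution t * ρ₀ * star (hH.evolution t : Matrix (Fin n) (Fin n) ℂ) := by
  rw [← Unitary.coe_star, Unitary.star_eq_inv, ← AddChar.map_neg_eq_inv, hH.coe_evolution,
    hH.coe_evolution, rhoEvol]
  push_cast
  ring_nf

theorem frobeniusNorm_rhoEvol_add_sub_rhoEvol (t T : ℝ) :
    frobeniusNorm (rhoEvol H ρ₀ (t + T) - rhoEvol H ρ₀ t) =
      frobeniusNorm (rhoEvol H ρ₀ T - ρ₀) := by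
  set U : Matrix (Fin n) (Fin n) ℂ := ↑(hH.evolution t)
  have hshift : rhoEvol H ρ₀ (t + T) - rhoEvol H ρ₀ t = U * (rhoEvol H ρ₀ T - ρ₀) * star U := by
    simp only [rhoEvol_eq_evolution hH, AddChar.map_add_eq_mul, Submonoid.coe_mul, star_mul]
    noncomm_ring
  rw [hshift, frobeniusNorm_mul_mul_star (hH.evolution t).2]

end Evolution

/-- Quantum recurrence for a system with finitely many energy levels: the evolution
`ρ(t) = exp(-itH)·ρ₀·exp(itH)` is almost periodic. For every `ε > 0` the set of
almost-periods `T` (satisfying `‖ρ(t+T) - ρ(t)‖ < ε` for all `t`) is relatively dense: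
every interval `[a, a+L]` of a suitable fixed length `L` contains such a `T`. -/
theorem rhoEvol_almost_periodic {n : ℕ} (H ρ₀ : Matrix (Fin n) (Fin n) ℂ)
    (hH : H.IsHermitian) :
    ∀ ε > (0 : ℝ), ∃ L > (0 : ℝ), ∀ a : ℝ, ∃ T : ℝ, a ≤ T ∧ T ≤ a + L ∧
      ∀ t : ℝ, frobeniusNorm (rhoEvol H ρ₀ (t + T) - rhoEvol H ρ₀ t) < ε := by
  intro ε hε
  let V : Set (unitaryGroup (Fin n) ℂ) :=
    {W | frobeniusNorm ((W : Matrix (Fin n) (Fin n) ℂ) * ρ₀ * star (W : Matrix _ _ ℂ) - ρ₀) < ε}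
  have hV : V ∈ 𝓝 1 :=
    (isOpen_lt (continuous_frobeniusNorm.comp (by fun_prop)) continuous_const).mem_nhds
      (by simpa [V, frobeniusNorm] using hε)
  obtain ⟨L, hL, hdense⟩ := hH.evolution.isRelativelyDense_preimage_of_mem_nhds_one hV
  refine ⟨L, hL, fun a => ?_⟩
  obtain ⟨T, ⟨haT, hTa⟩, hT⟩ := hdense a
  refine ⟨T, haT, hTa, fun t => ?_⟩
  rwa [frobeniusNorm_rhoEvol_add_sub_rhoEvol hH, rhoEvol_eq_evolution hH]
end
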